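/- Let D be the string disequality L ≠ R over string variables with regular constraints, let □ be a fresh symbol not in Σ, and let p be a fresh variable constrained to □*. Define D' as L∘p ≠ R∘p. Then D is satisfiable iff D' is satisfiable, and moreover whenever D is satisfiable, D' has a model σ' together with a position i < min(|σ'(L∘p)|, |σ'(R∘p)|) such that σ'(L∘p)[i] ≠ σ'(R∘p)[i] (a mismatch). -/

import Mathlib

/-- Lifting of a variable assignment to concatenations of variables. -/
def applyAssign {V W : Type*} (σ : V → List W) (t : List V) : List W :=
  (t.map σ).flatten

/-- Languages for the extended system: original variables keep their language
(embedded into the extended alphabet `Option Σ`, where `none` is the fresh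
padding symbol `□`), and the fresh variable (the `Sum.inr` one) ranges over `□*`. -/
def langExt {α V : Type*} (lang : V → Set (List α)) :
    V ⊕ Unit → Set (List (Option α))
  | Sum.inl v => (fun w => w.map some) '' lang v
  | Sum.inr _ => {w | ∀ a ∈ w, a = (none : Option α)}

/-!
Padding both sides with a fresh symbol reduces any solution of `L ≠ R` to a mismatch: if
`w₁ ≠ w₂` are words over `Σ`, then `w₁□` and `w₂□` cannot be prefixes of one another, because
`□` occurs in neither `w₁` nor `w₂`; two prefix-incomparable words differ at a common position.
Conversely, the padding variable contributes the same word to both sides, so cancelling it and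
erasing the embedding `Σ ↪ Option Σ` turns a model of `L∘p ≠ R∘p` back into a model of `L ≠ R`.
-/

namespace List

variable {α : Type*}

theorem exists_getElem_ne_of_not_prefix {l₁ l₂ : List α} (h₁ : ¬l₁ <+: l₂) (h₂ : ¬l₂ <+: l₁) :
    ∃ i, ∃ (hi₁ : i < l₁.length) (hi₂ : i < l₂.length), l₁[i] ≠ l₂[i] := by
  wlog hle : l₁.length ≤ l₂.length generalizing l₁ l₂
  · obtain ⟨i, hi₂, hi₁, hne⟩ := this h₂ h₁ (by omega)
    exact ⟨i, hi₁, hi₂, hne.symm⟩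
  rw [prefix_iff_getElem] at h₁
  push Not at h₁
  obtain ⟨i, hi, hne⟩ := h₁ hle
  exact ⟨i, hi, by omega, hne⟩

theorem eq_of_append_singleton_prefix {u v : List α} {x : α} (hx : x ∉ v)
    (h : u ++ [x] <+: v ++ [x]) : u = v := by
  rcases prefix_concat_iff.mp h with heq | hpre
  · exact append_cancel_right heq
  · exact absurd (hpre.subset (mem_append_right u (mem_singleton_self x))) hx

theorem exists_getElem_append_singleton_ne {u v : List α} {x : α} (hu : x ∉ u) (hv : x ∉ v)
    (hne : u ≠ v) :
    ∃ i, ∃ (hi₁ : i < (u ++ [x]).length) (hi₂ : i < (v ++ [x]).length),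
      (u ++ [x])[i] ≠ (v ++ [x])[i] :=
  exists_getElem_ne_of_not_prefix (fun h => hne (eq_of_append_singleton_prefix hv h))
    (fun h => hne (eq_of_append_singleton_prefix hu h).symm)

end List

section padding

variable {α V : Type*} {lang : V → Set (List α)}

theorem applyAssign_map_inl_append_inr {σ : V → List α}
    {σ' : V ⊕ Unit → List (Option α)} (hσ' : ∀ v, σ' (Sum.inl v) = (σ v).map some)
    (L : List V) :
    applyAssign σ' (L.map Sum.inl ++ [Sum.inr ()]) =
      (applyAssign σ L).map some ++ σ' (Sum.inr ()) := by
  simp [applyAssign, Function.comp_def, hσ']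

def padAssign (σ : V → List α) : V ⊕ Unit → List (Option α) :=
  Sum.elim (fun v => (σ v).map some) (fun _ => [none])

theorem padAssign_mem_langExt {σ : V → List α} (hσ : ∀ v, σ v ∈ lang v) :
    ∀ x, padAssign σ x ∈ langExt lang x
  | Sum.inl v => ⟨σ v, hσ v, rfl⟩
  | Sum.inr _ => by simp [padAssign, langExt]

theorem applyAssign_padAssign (σ : V → List α) (L : List V) :
    applyAssign (padAssign σ) (L.map Sum.inl ++ [Sum.inr ()]) =
      (applyAssign σ L).map some ++ [none] :=
  applyAssign_map_inl_append_inr (fun _ => rfl) L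

theorem exists_mismatch_padAssign {σ : V → List α} {L R : List V}
    (hne : applyAssign σ L ≠ applyAssign σ R) :
    ∃ i, ∃ (h1 : i < (applyAssign (padAssign σ) (L.map Sum.inl ++ [Sum.inr ()])).length)
      (h2 : i < (applyAssign (padAssign σ) (R.map Sum.inl ++ [Sum.inr ()])).length),
      (applyAssign (padAssign σ) (L.map Sum.inl ++ [Sum.inr ()]))[i] ≠
        (applyAssign (padAssign σ) (R.map Sum.inl ++ [Sum.inr ()]))[i] := by
  simp only [applyAssign_padAssign]
  exact List.exists_getElem_append_singleton_ne (by simp) (by simp)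
    ((List.map_injective_iff.mpr (Option.some_injective α)).ne hne)

theorem exists_model_of_padded_model {σ' : V ⊕ Unit → List (Option α)}
    (hσ' : ∀ v, σ' v ∈ langExt lang v) {L R : List V}
    (hne : applyAssign σ' (L.map Sum.inl ++ [Sum.inr ()]) ≠
      applyAssign σ' (R.map Sum.inl ++ [Sum.inr ()])) :
    ∃ σ : V → List α, (∀ v, σ v ∈ lang v) ∧ applyAssign σ L ≠ applyAssign σ R := by
  choose σ hσ hσσ' using fun v => hσ' (Sum.inl v)
  have hσ'σ : ∀ v, σ' (Sum.inl v) = (σ v).map some := fun v => (hσσ' v).symm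
  refine ⟨σ, hσ, fun heq => hne ?_⟩
  rw [applyAssign_map_inl_append_inr hσ'σ, applyAssign_map_inl_append_inr hσ'σ, heq]

theorem exists_padded_model_with_mismatch {σ : V → List α} (hσ : ∀ v, σ v ∈ lang v)
    {L R : List V} (hne : applyAssign σ L ≠ applyAssign σ R) :
    ∃ σ' : V ⊕ Unit → List (Option α), (∀ v, σ' v ∈ langExt lang v) ∧
      applyAssign σ' (L.map Sum.inl ++ [Sum.inr ()]) ≠
        applyAssign σ' (R.map Sum.inl ++ [Sum.inr ()]) ∧
      ∃ i, ∃ (h1 : i < (applyAssign σ' (L.map Sum.inl ++ [Sum.inr ()])).length)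
        (h2 : i < (applyAssign σ' (R.map Sum.inl ++ [Sum.inr ()])).length),
        (applyAssign σ' (L.map Sum.inl ++ [Sum.inr ()]))[i] ≠
          (applyAssign σ' (R.map Sum.inl ++ [Sum.inr ()]))[i] := by
  obtain ⟨i, h1, h2, hmis⟩ := exists_mismatch_padAssign (L := L) (R := R) hne
  exact ⟨padAssign σ, padAssign_mem_langExt hσ, fun heq => hmis (by simp only [heq]),
    i, h1, h2, hmis⟩

end padding

theorem padded_diseq_equisat_and_mismatch {α V : Type*}
    (lang : V → Set (List α)) (L R : List V) :
    ((∃ σ : V → List α, (∀ v, σ v ∈ lang v) ∧ applyAssign σ L ≠ applyAssign σ R) ↔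
      (∃ σ' : V ⊕ Unit → List (Option α), (∀ v, σ' v ∈ langExt lang v) ∧
        applyAssign σ' (L.map Sum.inl ++ [Sum.inr ()]) ≠
          applyAssign σ' (R.map Sum.inl ++ [Sum.inr ()])))
    ∧
    ((∃ σ : V → List α, (∀ v, σ v ∈ lang v) ∧ applyAssign σ L ≠ applyAssign σ R) →
      ∃ σ' : V ⊕ Unit → List (Option α), (∀ v, σ' v ∈ langExt lang v) ∧
        applyAssign σ' (L.map Sum.inl ++ [Sum.inr ()]) ≠
          applyAssign σ' (R.map Sum.inl ++ [Sum.inr ()]) ∧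
        ∃ i, ∃ (h1 : i < (applyAssign σ' (L.map Sum.inl ++ [Sum.inr ()])).length)
              (h2 : i < (applyAssign σ' (R.map Sum.inl ++ [Sum.inr ()])).length),
          (applyAssign σ' (L.map Sum.inl ++ [Sum.inr ()]))[i] ≠
            (applyAssign σ' (R.map Sum.inl ++ [Sum.inr ()]))[i]) := by
  refine ⟨⟨?_, ?_⟩, ?_⟩
  · rintro ⟨σ, hσ, hne⟩
    obtain ⟨σ', hσ', hne', -⟩ := exists_padded_model_with_mismatch hσ hne
    exact ⟨σ', hσ', hne'⟩
  · rintro ⟨σ', hσ', hne⟩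
    exact exists_model_of_padded_model hσ' hne
  · rintro ⟨σ, hσ, hne⟩
    exact exists_padded_model_with_mismatch hσ hne
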